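/- Fix θ ∈ ℝ and for a C² function w of (x, y, t) ∈ ℝ³ write w_X = cosθ·∂_x w − sinθ·∂_y w, w_Y = sinθ·∂_x w + cosθ·∂_y w, and let w_XX, w_XY, w_Xt, w_YY, w_tt denote the corresponding second derivatives (e.g. w_XX = X(Xw), w_Xt = ∂_t(Xw)). There exists ε₀ > 0 (independent of θ) such that the following holds for all 0 < ε ≤ ε₀. Let u be a C² function on a neighborhood of a point x₀ in the ball of radius 1/4 centered at 0 in ℝ³, and set v(x,y,t) = u(x,y,t) + 16ε(x² + y² + t²). Suppose that at x₀: the Hessian matrix D²v(x₀) is positive semidefinite, |Dv(x₀)| ≤ ε/2, and u satisfies (u_XX + 1)(u_YY + u_tt + u_t + 1) − u_XY² − u_Xt² = K for some K > 0 with u_XX + 1 > 0 and u_YY + u_tt + u_t + 1 > 0. Then at x₀ one has v_XX + v_YY + v_tt + 1/2 ≤ 2K, and hence det D²v(x₀) ≤ (2K/3)³. -/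

import Mathlib

open Metric

/-- The partial derivative of `w : ℝ³ → ℝ` in the `i`-th coordinate direction
(coordinates `(x, y, t)` correspond to indices `0, 1, 2`). -/
noncomputable def pd (i : Fin 3) (w : EuclideanSpace ℝ (Fin 3) → ℝ) :
    EuclideanSpace ℝ (Fin 3) → ℝ :=
  fun x => fderiv ℝ w x (EuclideanSpace.single i (1 : ℝ))

/-- The derivative `w_X = cos θ ∂_x w − sin θ ∂_y w`. -/
noncomputable def Xd (θ : ℝ) (w : EuclideanSpace ℝ (Fin 3) → ℝ) :
    EuclideanSpace ℝ (Fin 3) → ℝ :=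
  fun x => Real.cos θ * pd 0 w x - Real.sin θ * pd 1 w x

/-- The derivative `w_Y = sin θ ∂_x w + cos θ ∂_y w`. -/
noncomputable def Yd (θ : ℝ) (w : EuclideanSpace ℝ (Fin 3) → ℝ) :
    EuclideanSpace ℝ (Fin 3) → ℝ :=
  fun x => Real.sin θ * pd 0 w x + Real.cos θ * pd 1 w x

/-- The Hessian matrix of second partial derivatives of `w : ℝ³ → ℝ` at `x`. -/
noncomputable def hessianMatrix (w : EuclideanSpace ℝ (Fin 3) → ℝ)
    (x : EuclideanSpace ℝ (Fin 3)) : Matrix (Fin 3) (Fin 3) ℝ :=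
  Matrix.of fun i j => pd i (pd j w) x

/-! Since `D²u = D²v − 32ε·I`, the equation reads
`(v_XX + s)(v_YY + v_tt + t) − v_XY² − v_Xt² = K` with `s = 1 − 32ε` and `t = u_t + 1 − 64ε`.
Cauchy–Schwarz for the semidefinite form `D²v` bounds `v_XY²` and `v_Xt²` by `v_XX v_YY` and
`v_XX v_tt`, leaving `K ≥ t v_XX + s (v_YY + v_tt) + s t`. The smallness of `ε`, of `Dv(x₀)` and of
`x₀` makes `s, t ≥ 1/2`. As `v_XX + v_YY + v_tt` is the trace of `D²v`, AM–GM on its eigenvalues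
gives the determinant bound. -/

local notation "ℝ³" => EuclideanSpace ℝ (Fin 3)

open Matrix

lemma Matrix.PosSemidef.dotProduct_mulVec_sq_le {n : Type*} [Fintype n] [DecidableEq n]
    {M : Matrix n n ℝ} (hM : M.PosSemidef) (x y : n → ℝ) :
    (x ⬝ᵥ M *ᵥ y) ^ 2 ≤ (x ⬝ᵥ M *ᵥ x) * (y ⬝ᵥ M *ᵥ y) := by
  have hsymm : y ⬝ᵥ M *ᵥ x = x ⬝ᵥ M *ᵥ y := by
    rw [← dotProduct_transpose_mulVec, (isHermitian_iff_isSymm.1 hM.1).eq]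
  have hcs := M.toBilin'.apply_mul_apply_le_of_forall_zero_le
    (fun z => by simpa [Matrix.toBilin'_apply'] using hM.dotProduct_mulVec_nonneg z) x y
  simpa only [Matrix.toBilin'_apply', hsymm, ← sq] using hcs

lemma Matrix.PosSemidef.det_le_trace_div_three_pow {M : Matrix (Fin 3) (Fin 3) ℝ}
    (hM : M.PosSemidef) : M.det ≤ (M.trace / 3) ^ 3 := by
  have hdet : M.det = ∏ i, hM.1.eigenvalues i := by simpa using hM.1.det_eq_prod_eigenvalues
  have htr : M.trace = ∑ i, hM.1.eigenvalues i := by simpa using hM.1.trace_eq_sum_eigenvalues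
  rw [hdet, htr, Fin.prod_univ_three, Fin.sum_univ_three]
  have ha := hM.eigenvalues_nonneg 0
  have hb := hM.eigenvalues_nonneg 1
  have hc := hM.eigenvalues_nonneg 2
  set a := hM.1.eigenvalues 0
  set b := hM.1.eigenvalues 1
  set c := hM.1.eigenvalues 2
  have habc := add_nonneg (add_nonneg ha hb) hc
  nlinarith [mul_nonneg ha (sq_nonneg (b - c)), mul_nonneg hb (sq_nonneg (a - c)),
    mul_nonneg hc (sq_nonneg (a - b)), mul_nonneg habc (sq_nonneg (a - b)),
    mul_nonneg habc (sq_nonneg (b - c)), mul_nonneg habc (sq_nonneg (a - c))]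

lemma dotProduct_sub_smul_one_mulVec {n : Type*} [Fintype n] [DecidableEq n]
    (A : Matrix n n ℝ) (c : ℝ) (x y : n → ℝ) :
    x ⬝ᵥ (A - c • 1) *ᵥ y = x ⬝ᵥ A *ᵥ y - c * (x ⬝ᵥ y) := by
  simp [sub_mulVec, smul_mulVec, dotProduct_sub]

lemma sum_sq_coord_eq_norm_sq (p : ℝ³) : p 0 ^ 2 + p 1 ^ 2 + p 2 ^ 2 = ‖p‖ ^ 2 := by
  rw [EuclideanSpace.real_norm_sq_eq, Fin.sum_univ_three]

section PartialDerivatives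

variable {w f g : ℝ³ → ℝ} {x : ℝ³}

lemma HasFDerivAt.pd_eq {f' : ℝ³ →L[ℝ] ℝ} (h : HasFDerivAt w f' x) (i : Fin 3) :
    pd i w x = f' (EuclideanSpace.single i 1) := by
  rw [pd, h.fderiv]

lemma Filter.EventuallyEq.pd_eq (h : f =ᶠ[nhds x] g) (i : Fin 3) : pd i f x = pd i g x := by
  rw [pd, pd, h.fderiv_eq]

lemma pd_eq_gradient_apply (w : ℝ³ → ℝ) (x : ℝ³) (i : Fin 3) : pd i w x = gradient w x i := by
  have h : inner ℝ (gradient w x) (EuclideanSpace.single i 1) = pd i w x :=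
    InnerProductSpace.toDual_symm_apply
  rw [EuclideanSpace.inner_single_right, one_mul, conj_trivial] at h
  exact h.symm

lemma ContDiffAt.differentiableAt_pd (hw : ContDiffAt ℝ 2 w x) (j : Fin 3) :
    DifferentiableAt ℝ (pd j w) x :=
  (ContinuousLinearMap.apply ℝ ℝ (EuclideanSpace.single j (1 : ℝ))).differentiableAt.comp x
    ((hw.fderiv_right (m := 1) (by norm_num)).differentiableAt (by norm_num))

lemma pd_add (hf : DifferentiableAt ℝ f x) (hg : DifferentiableAt ℝ g x) (i : Fin 3) :
    pd i (fun y => f y + g y) x = pd i f x + pd i g x := by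
  have h : HasFDerivAt (fun y => f y + g y) (fderiv ℝ f x + fderiv ℝ g x) x :=
    hf.hasFDerivAt.add hg.hasFDerivAt
  rw [h.pd_eq]
  rfl

lemma pd_const_mul_norm_sq (c : ℝ) (j : Fin 3) (y : ℝ³) :
    pd j (fun p => c * ‖p‖ ^ 2) y = 2 * c * y j := by
  rw [((hasStrictFDerivAt_norm_sq y).hasFDerivAt.const_mul c).pd_eq j]
  simp [EuclideanSpace.inner_single_right]
  ring

lemma pd_const_mul_coord (c : ℝ) (i j : Fin 3) (y : ℝ³) :
    pd i (fun p : ℝ³ => c * p j) y = c * (1 : Matrix (Fin 3) (Fin 3) ℝ) i j := by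
  have h : HasFDerivAt (fun p : ℝ³ => c * p j) (c • EuclideanSpace.proj j) y :=
    ((EuclideanSpace.proj j : ℝ³ →L[ℝ] ℝ).hasFDerivAt (x := y)).const_mul c
  rw [h.pd_eq]
  simp [Matrix.one_apply, PiLp.single_apply, eq_comm]

lemma hessianMatrix_add (hf : ContDiffAt ℝ 2 f x) (hg : ContDiffAt ℝ 2 g x) :
    hessianMatrix (fun p => f p + g p) x = hessianMatrix f x + hessianMatrix g x := by
  have hdiff : ∀ {h : ℝ³ → ℝ}, ContDiffAt ℝ 2 h x → ∀ᶠ y in nhds x, DifferentiableAt ℝ h y :=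
    fun hh => (hh.eventually (by simp)).mono fun y hy => hy.differentiableAt (by norm_num)
  ext i j
  have hpd : pd j (fun p => f p + g p) =ᶠ[nhds x] fun y => pd j f y + pd j g y := by
    filter_upwards [hdiff hf, hdiff hg] with y hfy hgy using pd_add hfy hgy j
  rw [hessianMatrix, of_apply, hpd.pd_eq,
    pd_add (hf.differentiableAt_pd j) (hg.differentiableAt_pd j)]
  rfl

lemma hessianMatrix_const_mul_norm_sq (c : ℝ) (x : ℝ³) :
    hessianMatrix (fun p => c * ‖p‖ ^ 2) x = (2 * c) • 1 := by
  ext i j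
  have h : pd j (fun p => c * ‖p‖ ^ 2) = fun y => 2 * c * y j :=
    funext (pd_const_mul_norm_sq c j)
  rw [hessianMatrix, of_apply, h, pd_const_mul_coord, Matrix.smul_apply, smul_eq_mul]

lemma pd_add_const_mul_norm_sq (hf : DifferentiableAt ℝ f x) (c : ℝ) (i : Fin 3) :
    pd i (fun p => f p + c * ‖p‖ ^ 2) x = pd i f x + 2 * c * x i := by
  rw [pd_add hf ((contDiff_const.mul (contDiff_norm_sq ℝ)).differentiable one_ne_zero x),
    pd_const_mul_norm_sq]

lemma hessianMatrix_add_const_mul_norm_sq (hf : ContDiffAt ℝ 2 f x) (c : ℝ) :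
    hessianMatrix (fun p => f p + c * ‖p‖ ^ 2) x = hessianMatrix f x + (2 * c) • 1 := by
  rw [hessianMatrix_add hf (contDiff_const.mul (contDiff_norm_sq ℝ)).contDiffAt,
    hessianMatrix_const_mul_norm_sq]

end PartialDerivatives

-- The coefficient vectors of `X` and `Y` in the frame `∂_x, ∂_y, ∂_t`.
noncomputable def dirX (θ : ℝ) : Fin 3 → ℝ := ![Real.cos θ, -Real.sin θ, 0]

noncomputable def dirY (θ : ℝ) : Fin 3 → ℝ := ![Real.sin θ, Real.cos θ, 0]

section Frame

variable (θ : ℝ)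

@[simp] lemma dirX_dotProduct_dirX : dirX θ ⬝ᵥ dirX θ = 1 := by
  simp [dirX, dotProduct, Fin.sum_univ_three, ← sq]

@[simp] lemma dirY_dotProduct_dirY : dirY θ ⬝ᵥ dirY θ = 1 := by
  simp [dirY, dotProduct, Fin.sum_univ_three, ← sq]

@[simp] lemma dirY_dotProduct_dirX : dirY θ ⬝ᵥ dirX θ = 0 := by
  simp [dirX, dirY, dotProduct, Fin.sum_univ_three]
  ring

@[simp] lemma single_two_dotProduct_dirX : Pi.single 2 1 ⬝ᵥ dirX θ = 0 := by
  simp [dirX]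

lemma Xd_apply (w : ℝ³ → ℝ) (x : ℝ³) : Xd θ w x = dirX θ ⬝ᵥ fun i => pd i w x := by
  simp [Xd, dirX, dotProduct, Fin.sum_univ_three]
  ring

lemma Yd_apply (w : ℝ³ → ℝ) (x : ℝ³) : Yd θ w x = dirY θ ⬝ᵥ fun i => pd i w x := by
  simp [Yd, dirY, dotProduct, Fin.sum_univ_three]

end Frame

section SecondDerivatives

variable {w : ℝ³ → ℝ} {x : ℝ³}

lemma pd_Xd_eq_mulVec (hw : ContDiffAt ℝ 2 w x) (θ : ℝ) :
    (fun i => pd i (Xd θ w) x) = hessianMatrix w x *ᵥ dirX θ := by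
  have h : HasFDerivAt (Xd θ w)
      (Real.cos θ • fderiv ℝ (pd 0 w) x - Real.sin θ • fderiv ℝ (pd 1 w) x) x :=
    ((hw.differentiableAt_pd 0).hasFDerivAt.const_mul _).sub
      ((hw.differentiableAt_pd 1).hasFDerivAt.const_mul _)
  ext i
  rw [h.pd_eq]
  simp [mulVec, dotProduct, Fin.sum_univ_three, dirX, hessianMatrix, pd]
  ring

lemma pd_Yd_eq_mulVec (hw : ContDiffAt ℝ 2 w x) (θ : ℝ) :
    (fun i => pd i (Yd θ w) x) = hessianMatrix w x *ᵥ dirY θ := by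
  have h : HasFDerivAt (Yd θ w)
      (Real.sin θ • fderiv ℝ (pd 0 w) x + Real.cos θ • fderiv ℝ (pd 1 w) x) x :=
    ((hw.differentiableAt_pd 0).hasFDerivAt.const_mul _).add
      ((hw.differentiableAt_pd 1).hasFDerivAt.const_mul _)
  ext i
  rw [h.pd_eq]
  simp [mulVec, dotProduct, Fin.sum_univ_three, dirY, hessianMatrix, pd]
  ring

lemma Xd_Xd_eq_dotProduct (hw : ContDiffAt ℝ 2 w x) (θ : ℝ) :
    Xd θ (Xd θ w) x = dirX θ ⬝ᵥ hessianMatrix w x *ᵥ dirX θ := by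
  rw [Xd_apply, pd_Xd_eq_mulVec hw]

lemma Yd_Xd_eq_dotProduct (hw : ContDiffAt ℝ 2 w x) (θ : ℝ) :
    Yd θ (Xd θ w) x = dirY θ ⬝ᵥ hessianMatrix w x *ᵥ dirX θ := by
  rw [Yd_apply, pd_Xd_eq_mulVec hw]

lemma Yd_Yd_eq_dotProduct (hw : ContDiffAt ℝ 2 w x) (θ : ℝ) :
    Yd θ (Yd θ w) x = dirY θ ⬝ᵥ hessianMatrix w x *ᵥ dirY θ := by
  rw [Yd_apply, pd_Yd_eq_mulVec hw]

lemma pd_two_Xd_eq_dotProduct (hw : ContDiffAt ℝ 2 w x) (θ : ℝ) :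
    pd 2 (Xd θ w) x = Pi.single 2 1 ⬝ᵥ hessianMatrix w x *ᵥ dirX θ := by
  rw [single_one_dotProduct, ← pd_Xd_eq_mulVec hw]

lemma pd_two_pd_two_eq_dotProduct (w : ℝ³ → ℝ) (x : ℝ³) :
    pd 2 (pd 2 w) x = Pi.single 2 1 ⬝ᵥ hessianMatrix w x *ᵥ Pi.single 2 1 := by
  simp [hessianMatrix]

lemma trace_hessianMatrix (hw : ContDiffAt ℝ 2 w x) (θ : ℝ) :
    (hessianMatrix w x).trace = Xd θ (Xd θ w) x + Yd θ (Yd θ w) x + pd 2 (pd 2 w) x := by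
  rw [Xd_Xd_eq_dotProduct hw, Yd_Yd_eq_dotProduct hw, trace_fin_three]
  simp [dirX, dirY, dotProduct, mulVec, Fin.sum_univ_three, hessianMatrix]
  linear_combination (-(pd 0 (pd 0 w) x) - pd 1 (pd 1 w) x) * Real.sin_sq_add_cos_sq θ

end SecondDerivatives

lemma add_add_add_half_le_two_mul {A B C p q s t K : ℝ} (hA : 0 ≤ A) (hB : 0 ≤ B) (hC : 0 ≤ C)
    (hp : p ^ 2 ≤ B * A) (hq : q ^ 2 ≤ C * A) (hs : 1 / 2 ≤ s) (ht : 1 / 2 ≤ t)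
    (hK : (A + s) * (B + C + t) - p ^ 2 - q ^ 2 = K) :
    A + B + C + 1 / 2 ≤ 2 * K := by
  -- `K ≥ (A + s)(B + C + t) − A(B + C) = tA + s(B + C) + st`
  nlinarith [mul_le_mul_of_nonneg_left ht hA, mul_le_mul_of_nonneg_left hs (add_nonneg hB hC),
    mul_le_mul hs ht (by norm_num) (by linarith)]

/-- The left-hand side of the reduced Calabi–Yau equation (3.5). -/
noncomputable def calabiYauOperator (θ : ℝ) (u : ℝ³ → ℝ) (x : ℝ³) : ℝ :=
  (Xd θ (Xd θ u) x + 1) * (Yd θ (Yd θ u) x + pd 2 (pd 2 u) x + pd 2 u x + 1) -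
    (Yd θ (Xd θ u) x) ^ 2 - (pd 2 (Xd θ u) x) ^ 2

lemma trace_hessianMatrix_add_half_le {u : ℝ³ → ℝ} {x : ℝ³} {c : ℝ} (θ : ℝ)
    (hu : ContDiffAt ℝ 2 u x) (hM : (hessianMatrix (fun p => u p + c * ‖p‖ ^ 2) x).PosSemidef)
    (hc : c ≤ 1 / 4) (hut : 4 * c - 1 / 2 ≤ pd 2 u x) :
    (hessianMatrix (fun p => u p + c * ‖p‖ ^ 2) x).trace + 1 / 2 ≤
      2 * calabiYauOperator θ u x := by
  have hv : ContDiffAt ℝ 2 (fun p => u p + c * ‖p‖ ^ 2) x :=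
    hu.add (contDiff_const.mul (contDiff_norm_sq ℝ)).contDiffAt
  have hH : hessianMatrix u x = hessianMatrix (fun p => u p + c * ‖p‖ ^ 2) x - (2 * c) • 1 := by
    rw [hessianMatrix_add_const_mul_norm_sq hu, add_sub_cancel_right]
  have hnonneg : ∀ z, 0 ≤ z ⬝ᵥ hessianMatrix (fun p => u p + c * ‖p‖ ^ 2) x *ᵥ z := by
    simpa using hM.dotProduct_mulVec_nonneg
  rw [calabiYauOperator, trace_hessianMatrix hv θ, Xd_Xd_eq_dotProduct hv, Yd_Yd_eq_dotProduct hv,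
    pd_two_pd_two_eq_dotProduct, Xd_Xd_eq_dotProduct hu, Yd_Yd_eq_dotProduct hu,
    pd_two_pd_two_eq_dotProduct u, Yd_Xd_eq_dotProduct hu, pd_two_Xd_eq_dotProduct hu, hH]
  simp only [dotProduct_sub_smul_one_mulVec]
  simp only [dirX_dotProduct_dirX, dirY_dotProduct_dirY, dirY_dotProduct_dirX,
    single_two_dotProduct_dirX, dotProduct_single_one, Pi.single_eq_same, mul_one, mul_zero,
    sub_zero]
  exact add_add_add_half_le_two_mul (hnonneg _) (hnonneg _) (hnonneg _)
    (hM.dotProduct_mulVec_sq_le _ _) (hM.dotProduct_mulVec_sq_le _ _)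
    (s := 1 - 2 * c) (t := pd 2 u x + 1 - 4 * c) (by linarith) (by linarith) (by ring)

/-- The key pointwise estimate (2.1) verified in Section 3: at a contact point `x₀` in the ball
of radius `1/4` where `v = u + 16ε(x² + y² + t²)` has positive semidefinite Hessian and small
gradient, and where `u` satisfies the reduced Calabi–Yau equation with right-hand side `K`,
one has `v_XX + v_YY + v_tt + 1/2 ≤ 2K` and `det D²v ≤ (2K/3)³`. -/
theorem key_pointwise_estimate :
    ∃ ε₀ : ℝ, 0 < ε₀ ∧
      ∀ (θ ε : ℝ), 0 < ε → ε ≤ ε₀ →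
        ∀ (u : EuclideanSpace ℝ (Fin 3) → ℝ) (x₀ : EuclideanSpace ℝ (Fin 3)),
          x₀ ∈ ball (0 : EuclideanSpace ℝ (Fin 3)) (1 / 4) →
          ContDiffAt ℝ 2 u x₀ →
          ∀ (v : EuclideanSpace ℝ (Fin 3) → ℝ),
            v = (fun p => u p + 16 * ε * ((p 0) ^ 2 + (p 1) ^ 2 + (p 2) ^ 2)) →
            (hessianMatrix v x₀).PosSemidef →
            ‖gradient v x₀‖ ≤ ε / 2 →
            ∀ K : ℝ, 0 < K →
              (Xd θ (Xd θ u) x₀ + 1) *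
                  (Yd θ (Yd θ u) x₀ + pd 2 (pd 2 u) x₀ + pd 2 u x₀ + 1) -
                (Yd θ (Xd θ u) x₀) ^ 2 - (pd 2 (Xd θ u) x₀) ^ 2 = K →
              0 < Xd θ (Xd θ u) x₀ + 1 →
              0 < Yd θ (Yd θ u) x₀ + pd 2 (pd 2 u) x₀ + pd 2 u x₀ + 1 →
              Xd θ (Xd θ v) x₀ + Yd θ (Yd θ v) x₀ + pd 2 (pd 2 v) x₀ + 1 / 2 ≤ 2 * K ∧
                (hessianMatrix v x₀).det ≤ (2 * K / 3) ^ 3 := by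
  refine ⟨1 / 200, by norm_num, ?_⟩
  intro θ ε hε hε₀ u x₀ hx₀ hu v hv hM hgrad K _ heq _ _
  simp only [sum_sq_coord_eq_norm_sq] at hv
  subst hv
  have hv : ContDiffAt ℝ 2 (fun p => u p + 16 * ε * ‖p‖ ^ 2) x₀ :=
    hu.add (contDiff_const.mul (contDiff_norm_sq ℝ)).contDiffAt
  have hvt : |pd 2 u x₀ + 2 * (16 * ε) * x₀ 2| ≤ ε / 2 := by
    rw [← pd_add_const_mul_norm_sq (hu.differentiableAt two_ne_zero), pd_eq_gradient_apply]
    exact (PiLp.norm_apply_le _ 2).trans hgrad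
  have hx : |x₀ 2| < 1 / 4 := (PiLp.norm_apply_le x₀ 2).trans_lt (mem_ball_zero_iff.1 hx₀)
  have htrace := trace_hessianMatrix_add_half_le θ hu hM (by linarith)
    (by nlinarith [abs_le.1 hvt, abs_lt.1 hx])
  rw [show calabiYauOperator θ u x₀ = K from heq] at htrace
  refine ⟨by rwa [trace_hessianMatrix hv θ] at htrace, ?_⟩
  calc (hessianMatrix _ x₀).det ≤ ((hessianMatrix _ x₀).trace / 3) ^ 3 :=
        hM.det_le_trace_div_three_pow
    _ ≤ (2 * K / 3) ^ 3 := by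
        gcongr
        · linarith [hM.trace_nonneg]
        · linarith
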